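/- Let F_q be a prime field, m > 1 with m | (q−1), ψ a nontrivial additive character, T as above with nonvanishing values, and S(x) = x^(q−2)·T(x^((q−1)/m)). Then for a = 0 and b ∈ F_q^×, |W_S(ψ, 0, b)| ≤ (m−1)·q^(1/2) + 2. -/

import Mathlib

/-!
After splitting off `x = 0` and substituting `x = u⁻¹`, the sum becomes `1 + ∑ ψ(c(u) u)` over
`u ∈ 𝔽_qˣ`, where `c(u) = b T(u⁻ⁿ)` (`n = (q-1)/m`) is nonzero and constant on the cosets of the
group `K` of `n`-th roots of unity, which has index `m`. On a coset `uK` the sum is a Gauss period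
`∑_{k ∈ K} ψ(c(u) u k)`. Expanding the indicator of `K` in the `m` characters trivial on `K`
writes `m` times a Gauss period as `-1` plus `m - 1` Gauss sums of absolute value `√q`; averaging
over the cosets bounds the whole sum over `𝔽_qˣ` by `1 + (m - 1)√q`.
-/

open Finset

lemma Fintype.sum_eq_apply_zero_add_sum_units {G₀ β : Type*} [GroupWithZero G₀] [Fintype G₀]
    [DecidableEq G₀] [AddCommMonoid β] (f : G₀ → β) :
    ∑ x, f x = f 0 + ∑ u : G₀ˣ, f u := by
  rw [← add_sum_erase _ _ (mem_univ 0),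
    ← Fintype.sum_equiv unitsEquivNeZero.symm _ _ (fun _ => rfl),
    Finset.sum_subtype (p := (· ≠ 0)) _ (by simp)]
  rfl

open Classical in
lemma MulChar.sum_subgroup_apply {M R : Type*} [CommMonoid M] [CommRing R] [IsDomain R]
    (X : Subgroup (MulChar M R)) [Fintype X] (a : M) :
    ∑ χ : X, (χ : MulChar M R) a = if ∀ χ ∈ X, χ a = 1 then (Nat.card X : R) else 0 := by
  split_ifs with h
  · simp [fun χ : X => h χ χ.2, Nat.card_eq_fintype_card]
  · push Not at h
    obtain ⟨χ₁, hχ₁X, hχ₁⟩ := h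
    have hfix : χ₁ a * ∑ χ : X, (χ : MulChar M R) a = ∑ χ : X, (χ : MulChar M R) a := by
      rw [mul_sum]
      exact Fintype.sum_equiv (Equiv.mulLeft ⟨χ₁, hχ₁X⟩) _ _ (fun _ => rfl)
    have : (χ₁ a - 1) * ∑ χ : X, (χ : MulChar M R) a = 0 := by rw [sub_mul, hfix]; ring
    exact (mul_eq_zero.mp this).resolve_left (sub_ne_zero.mpr hχ₁)

lemma Fintype.card_smul_sum_eq_sum_sum_mul {G β : Type*} [Group G] [Fintype G] [AddCommMonoid β]
    (K : Subgroup G) [Fintype K] (f : G → β) :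
    Fintype.card K • ∑ g, f g = ∑ g, ∑ k : K, f (g * k) := by
  rw [sum_comm, ← Finset.card_univ, ← sum_const]
  exact Finset.sum_congr rfl fun k _ =>
    (Fintype.sum_equiv (Equiv.mulRight (k : G)) _ _ fun _ => rfl).symm

lemma inv_pow_card_sub_one {G : Type*} [Group G] [Fintype G] (g : G) :
    g⁻¹ ^ (Fintype.card G - 1) = g := by
  rw [inv_pow, inv_eq_iff_mul_eq_one, ← pow_succ, Nat.sub_add_cancel Fintype.card_pos,
    pow_card_eq_one]

section FiniteField

variable {F : Type*} [Field F] [Fintype F]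

lemma FiniteField.index_ker_powMonoidHom {m : ℕ} (hm : m ∣ Fintype.card F - 1) :
    (powMonoidHom ((Fintype.card F - 1) / m) : Fˣ →* Fˣ).ker.index = m := by
  have : 1 < Fintype.card F := Fintype.one_lt_card
  rw [IsCyclic.index_powMonoidHom_ker, Nat.card_units, Nat.card_eq_fintype_card,
    Nat.gcd_eq_right (Nat.div_dvd_of_dvd hm), Nat.div_div_self hm (by omega)]

lemma gaussSum_eq_sum_units [DecidableEq F] (χ : MulChar F ℂ) (ψ : AddChar F ℂ) :
    gaussSum χ ψ = ∑ u : Fˣ, χ u * ψ u := by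
  rw [gaussSum, Fintype.sum_eq_apply_zero_add_sum_units, MulChar.map_zero, zero_mul, zero_add]

lemma norm_gaussSum {χ : MulChar F ℂ} (hχ : χ ≠ 1) {ψ : AddChar F ℂ} (hψ : ψ ≠ 1) :
    ‖gaussSum χ ψ‖ = √(Fintype.card F) := by
  have h : ((‖gaussSum χ ψ‖ ^ 2 : ℝ) : ℂ) = Fintype.card F := by
    rw [Complex.ofReal_pow, ← Complex.mul_conj', Complex.star_def.symm, star_gaussSum_eq,
      gaussSum_mul_gaussSum_eq_card hχ (AddChar.IsPrimitive.of_ne_one hψ)]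
  rw [← Real.sqrt_sq (norm_nonneg _)]
  exact_mod_cast congrArg Real.sqrt (by exact_mod_cast h)

lemma index_mul_sum_subgroup_eq_sum_gaussSum [DecidableEq F] (ψ : AddChar F ℂ) (K : Subgroup Fˣ)
    [Fintype K] [Fintype (MulChar.subgroupOrderIsoSubgroupMulChar F ℂ K).ofDual] :
    (K.index : ℂ) * ∑ k : K, ψ ((k : Fˣ) : F) =
      ∑ χ : (MulChar.subgroupOrderIsoSubgroupMulChar F ℂ K).ofDual,
        gaussSum (χ : MulChar F ℂ) ψ := by
  have hmem (u : Fˣ) :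
      (∀ χ ∈ (MulChar.subgroupOrderIsoSubgroupMulChar F ℂ K).ofDual, χ u = 1) ↔ u ∈ K := by
    rw [← MulChar.mem_subgroupOrderIsoSubgroupMulChar_symm_iff, OrderDual.toDual_ofDual,
      OrderIso.symm_apply_apply]
  have hcard : Nat.card (MulChar.subgroupOrderIsoSubgroupMulChar F ℂ K).ofDual = K.index :=
    MulChar.card_subgroupOrderIsoSubgroupMulChar
  classical
  simp_rw [gaussSum_eq_sum_units]
  rw [sum_comm]
  simp_rw [← sum_mul, MulChar.sum_subgroup_apply, hmem, hcard, ite_mul, zero_mul]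
  rw [← sum_filter, ← mul_sum]
  congr 1
  exact (Finset.sum_subtype (p := (· ∈ K)) _ (fun _ => by simp) (fun u : Fˣ => ψ u)).symm

theorem index_mul_norm_sum_subgroup_le [DecidableEq F] {ψ : AddChar F ℂ} (hψ : ψ ≠ 1)
    (K : Subgroup Fˣ) [Fintype K] :
    K.index * ‖∑ k : K, ψ ((k : Fˣ) : F)‖ ≤ 1 + (K.index - 1) * √(Fintype.card F) := by
  classical
  let X := (MulChar.subgroupOrderIsoSubgroupMulChar F ℂ K).ofDual
  have : Fintype X := Fintype.ofFinite X
  have hcard : Nat.card X = K.index := MulChar.card_subgroupOrderIsoSubgroupMulChar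
  have hindex : 1 ≤ K.index := Nat.one_le_iff_ne_zero.mpr Subgroup.index_ne_zero_of_finite
  calc K.index * ‖∑ k : K, ψ ((k : Fˣ) : F)‖
      = ‖∑ χ : X, gaussSum (χ : MulChar F ℂ) ψ‖ := by
        rw [← index_mul_sum_subgroup_eq_sum_gaussSum, norm_mul, Complex.norm_natCast]
    _ = ‖gaussSum 1 ψ + ∑ χ ∈ (univ : Finset X).erase 1, gaussSum (χ : MulChar F ℂ) ψ‖ := by
        rw [← add_sum_erase _ _ (mem_univ (1 : X))]; rfl
    _ ≤ ‖gaussSum 1 ψ‖ + ∑ χ ∈ (univ : Finset X).erase 1, ‖gaussSum (χ : MulChar F ℂ) ψ‖ :=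
        (norm_add_le _ _).trans (by gcongr; exact norm_sum_le _ _)
    _ = 1 + (K.index - 1) * √(Fintype.card F) := by
        rw [gaussSum_one_left hψ, norm_neg, norm_one,
          sum_congr rfl fun χ hχ => norm_gaussSum (fun h => ne_of_mem_erase hχ (Subtype.ext h)) hψ,
          sum_const, card_erase_of_mem (mem_univ _), card_univ, ← Nat.card_eq_fintype_card, hcard,
          nsmul_eq_mul, Nat.cast_sub hindex, Nat.cast_one]

theorem norm_sum_addChar_mul_le [DecidableEq F] {ψ : AddChar F ℂ} (hψ : ψ ≠ 1)
    (K : Subgroup Fˣ) [Fintype K] (c : Fˣ → F) (hc : ∀ u, c u ≠ 0)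
    (hcK : ∀ u, ∀ k ∈ K, c (u * k) = c u) :
    ‖∑ u : Fˣ, ψ (c u * u)‖ ≤ 1 + (K.index - 1) * √(Fintype.card F) := by
  set D := 1 + (K.index - 1 : ℝ) * √(Fintype.card F)
  have hcoset (u : Fˣ) : K.index * ‖∑ k : K, ψ (c (u * k) * ↑(u * k))‖ ≤ D := by
    have hψu : ψ.mulShift (c u * u) ≠ 1 :=
      AddChar.IsPrimitive.of_ne_one hψ (mul_ne_zero (hc u) u.ne_zero)
    have hshift : ∑ k : K, ψ (c (u * k) * ↑(u * k)) = ∑ k : K, ψ.mulShift (c u * u) ↑(k : Fˣ) :=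
      sum_congr rfl fun k _ => by rw [hcK u k k.2, AddChar.mulShift_apply, Units.val_mul, mul_assoc]
    rw [hshift]
    exact index_mul_norm_sum_subgroup_le hψu K
  have hcard : Fintype.card K * K.index = Fintype.card Fˣ := by
    simpa only [Nat.card_eq_fintype_card] using K.card_mul_index
  have hpos : (0 : ℝ) < Fintype.card K * K.index := by
    have := Subgroup.index_ne_zero_of_finite (H := K)
    positivity
  refine le_of_mul_le_mul_left ?_ hpos
  calc (Fintype.card K * K.index : ℝ) * ‖∑ u : Fˣ, ψ (c u * u)‖
      = K.index * ‖Fintype.card K • ∑ u : Fˣ, ψ (c u * u)‖ := by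
        rw [nsmul_eq_mul, norm_mul, Complex.norm_natCast]; ring
    _ = K.index * ‖∑ u : Fˣ, ∑ k : K, ψ (c (u * k) * ↑(u * k))‖ := by
        rw [Fintype.card_smul_sum_eq_sum_sum_mul]
    _ ≤ ∑ u : Fˣ, K.index * ‖∑ k : K, ψ (c (u * k) * ↑(u * k))‖ := by
        rw [← mul_sum]; gcongr; exact norm_sum_le _ _
    _ ≤ ∑ _u : Fˣ, D := sum_le_sum fun u _ => hcoset u
    _ = (Fintype.card K * K.index : ℝ) * D := by
        rw [sum_const, card_univ, nsmul_eq_mul, ← hcard, Nat.cast_mul]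

end FiniteField

theorem stmt10 (q : ℕ) [Fact q.Prime] (m : ℕ) (hm : 1 < m) (hmdvd : m ∣ q - 1)
    (ψ : AddChar (ZMod q) ℂ) (hψ : ψ ≠ 1)
    (T : ZMod q → ZMod q) (hT : ∀ x : ZMod q, x ≠ 0 → T (x ^ ((q - 1) / m)) ≠ 0)
    (S : ZMod q → ZMod q) (hS : ∀ x, S x = x ^ (q - 2) * T (x ^ ((q - 1) / m)))
    (b : ZMod q) (hb : b ≠ 0) :
    ‖∑ x : ZMod q, ψ (0 * x + b * S x)‖ ≤ ((m : ℝ) - 1) * Real.sqrt q + 2 := by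
  have hq : 2 < q := by
    have hq2 := (Fact.out : q.Prime).two_le
    have hmq := Nat.le_of_dvd (by omega) hmdvd
    omega
  set n := (q - 1) / m
  set K := (powMonoidHom n : (ZMod q)ˣ →* (ZMod q)ˣ).ker
  have hK : K.index = m := by
    simpa only [ZMod.card] using
      FiniteField.index_ker_powMonoidHom (F := ZMod q) (by rwa [ZMod.card])
  have hS0 : S 0 = 0 := by rw [hS, zero_pow (by omega), zero_mul]
  have hS_inv (u : (ZMod q)ˣ) : S ↑u⁻¹ = u * T ((↑u⁻¹ : ZMod q) ^ n) := by
    have hpow := inv_pow_card_sub_one u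
    rw [ZMod.card_units, show q - 1 - 1 = q - 2 by omega] at hpow
    rw [hS, ← Units.val_pow_eq_pow_val, hpow]
  have hsplit : ∑ x : ZMod q, ψ (0 * x + b * S x) =
      1 + ∑ u : (ZMod q)ˣ, ψ (b * T ((↑u⁻¹ : ZMod q) ^ n) * u) := by
    rw [Fintype.sum_eq_apply_zero_add_sum_units, ← Equiv.sum_comp (Equiv.inv (ZMod q)ˣ)]
    simp only [zero_mul, zero_add, hS0, mul_zero, AddChar.map_zero_eq_one, Equiv.inv_apply, hS_inv]
    exact congrArg _ (sum_congr rfl fun u _ => by rw [← mul_assoc, mul_right_comm])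
  have hbound := norm_sum_addChar_mul_le hψ K (fun u => b * T ((↑u⁻¹ : ZMod q) ^ n))
    (fun u => mul_ne_zero hb (hT _ (Units.ne_zero _)))
    (fun u k hk => by
      rw [MonoidHom.mem_ker, powMonoidHom_apply] at hk
      simp only [mul_inv, Units.val_mul, mul_pow, ← Units.val_pow_eq_pow_val, inv_pow, hk,
        inv_one, Units.val_one, mul_one])
  rw [ZMod.card, hK] at hbound
  rw [hsplit]
  calc ‖1 + ∑ u : (ZMod q)ˣ, ψ (b * T ((↑u⁻¹ : ZMod q) ^ n) * u)‖
      ≤ 1 + (1 + (m - 1) * √q) := (norm_add_le _ _).trans (by rw [norm_one]; gcongr)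
    _ = (m - 1) * √q + 2 := by ring
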